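/- arXiv:1911.02058 — 8 statements merged into one kernel-verified Lean document; each statement's English description precedes it below -/
import Mathlib

section
/- If a permutation group G on a finite set Ω has the (k,l)-universal transversal property with k ≤ l < |Ω|, then G has the (k,l+1)-universal transversal property. -/
variable {Ω : Type*} [Fintype Ω] [DecidableEq Ω]

/-- `P` is a partition of the finite set `B` into exactly `k` nonempty parts. -/
def IsKPartition (P : Finset (Finset Ω)) (B : Finset Ω) (k : ℕ) : Prop :=
  P.card = k ∧ (∀ p ∈ P, p.Nonempty) ∧
    (∀ p ∈ P, ∀ q ∈ P, p ≠ q → Disjoint p q) ∧ P.biUnion id = B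

/-- `G` has the `(k,l)`-universal transversal property. -/
def HasUT (G : Subgroup (Equiv.Perm Ω)) (k l : ℕ) : Prop :=
  ∀ A B : Finset Ω, A.card = k → B.card = l →
    ∀ P : Finset (Finset Ω), IsKPartition P B k →
      ∃ g ∈ G, ∀ p ∈ P, ((A.image g) ∩ p).card = 1

/-- `G` is `m`-homogeneous. -/
def IsHomogeneous (G : Subgroup (Equiv.Perm Ω)) (m : ℕ) : Prop :=
  ∀ A B : Finset Ω, A.card = m → B.card = m → ∃ g ∈ G, A.image g = B

theorem ut_monotone (G : Subgroup (Equiv.Perm Ω)) (k l : ℕ)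
    (hkl : k ≤ l) (hln : l < Fintype.card Ω) (h : HasUT G k l) :
    HasUT G k (l + 1) := by
  intro A B hA hB P hP
  obtain ⟨hPcard, hPne, hPdisj, hPunion⟩ := hP
  -- find a part with at least two elements
  have hex : ∃ p0 ∈ P, 2 ≤ p0.card := by
    by_contra hc
    push_neg at hc
    have h1 : B.card ≤ ∑ p ∈ P, p.card := by
      rw [← hPunion]; exact Finset.card_biUnion_le
    have h2 : ∑ p ∈ P, p.card ≤ ∑ p ∈ P, 1 :=
      Finset.sum_le_sum fun p hp => Nat.lt_succ_iff.mp (hc p hp)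
    simp only [Finset.sum_const, smul_eq_mul, mul_one, hPcard] at h2
    omega
  obtain ⟨p0, hp0P, hp0card⟩ := hex
  obtain ⟨b, hb⟩ := Finset.card_pos.mp (by omega : 0 < p0.card)
  set p0' := p0.erase b with hp0'def
  have hp0'sub : p0' ⊆ p0 := Finset.erase_subset _ _
  have hp0'ne : p0'.Nonempty := by
    rw [← Finset.card_pos, Finset.card_erase_of_mem hb]; omega
  have hp0'notin : p0' ∉ P.erase p0 := by
    intro hmem
    obtain ⟨hne, hq⟩ := Finset.mem_erase.mp hmem
    have hdisj := hPdisj p0 hp0P p0' hq (Ne.symm hne)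
    obtain ⟨x, hx⟩ := hp0'ne
    exact Finset.disjoint_left.mp hdisj (hp0'sub hx) hx
  set P' := insert p0' (P.erase p0) with hP'def
  have hkpos : 1 ≤ k := by
    rw [← hPcard]; exact Finset.card_pos.mpr ⟨p0, hp0P⟩
  have hP'card : P'.card = k := by
    rw [hP'def, Finset.card_insert_of_notMem hp0'notin,
      Finset.card_erase_of_mem hp0P, hPcard]
    omega
  have hbB : b ∈ B := by
    rw [← hPunion]; exact Finset.mem_biUnion.mpr ⟨p0, hp0P, hb⟩
  have hB'card : (B.erase b).card = l := by
    rw [Finset.card_erase_of_mem hbB, hB]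
    omega
  have hmemP' : ∀ p ∈ P', p = p0' ∨ (p ∈ P ∧ p ≠ p0) := by
    intro p hp
    rcases Finset.mem_insert.mp hp with h1 | h1
    · exact Or.inl h1
    · exact Or.inr ⟨(Finset.mem_erase.mp h1).2, (Finset.mem_erase.mp h1).1⟩
  have hP'ne : ∀ p ∈ P', p.Nonempty := by
    intro p hp
    rcases hmemP' p hp with h1 | ⟨h1, _⟩
    · exact h1 ▸ hp0'ne
    · exact hPne p h1
  have hP'disj : ∀ p ∈ P', ∀ q ∈ P', p ≠ q → Disjoint p q := by
    intro p hp q hq hpq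
    rcases hmemP' p hp with h1 | ⟨h1, h1'⟩ <;> rcases hmemP' q hq with h2 | ⟨h2, h2'⟩
    · exact absurd (h1.trans h2.symm) hpq
    · exact h1 ▸ Finset.disjoint_of_subset_left hp0'sub (hPdisj p0 hp0P q h2 (Ne.symm h2'))
    · exact h2 ▸ Finset.disjoint_of_subset_right hp0'sub (hPdisj p h1 p0 hp0P h1')
    · exact hPdisj p h1 q h2 hpq
  have hbnot : b ∉ (P.erase p0).biUnion id := by
    intro hmem
    obtain ⟨q, hq, hbq⟩ := Finset.mem_biUnion.mp hmem
    obtain ⟨hne, hqP⟩ := Finset.mem_erase.mp hq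
    exact Finset.disjoint_left.mp (hPdisj p0 hp0P q hqP (Ne.symm hne)) hb hbq
  have hsplit : P.biUnion id = p0 ∪ (P.erase p0).biUnion id := by
    conv_lhs => rw [← Finset.insert_erase hp0P]
    rw [Finset.biUnion_insert]
    rfl
  have hP'union : P'.biUnion id = B.erase b := by
    rw [hP'def, Finset.biUnion_insert, ← hPunion, hsplit,
      Finset.erase_union_distrib]
    congr 1
    exact (Finset.erase_eq_of_notMem hbnot).symm
  obtain ⟨g, hgG, hg⟩ := h A (B.erase b) hA hB'card P' ⟨hP'card, hP'ne, hP'disj, hP'union⟩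
  have hAgcard : (A.image g).card = k := by
    rw [Finset.card_image_of_injective A g.injective, hA]
  -- counting: A.image g ⊆ B.erase b, so b ∉ A.image g
  have hsub : A.image g ⊆ B.erase b := by
    have hcard : ((A.image g) ∩ P'.biUnion id).card = k := by
      rw [Finset.inter_biUnion]
      rw [Finset.card_biUnion]
      · simp only [id_eq]
        rw [Finset.sum_congr rfl fun p hp => hg p hp, Finset.sum_const,
          smul_eq_mul, mul_one, hP'card]
      · intro p hp q hq hpq
        exact Finset.disjoint_of_subset_left Finset.inter_subset_right
          (Finset.disjoint_of_subset_right Finset.inter_subset_right (hP'disj p hp q hq hpq))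
    have heq : (A.image g) ∩ P'.biUnion id = A.image g := by
      apply Finset.eq_of_subset_of_card_le Finset.inter_subset_left
      rw [hcard, hAgcard]
    rw [← hP'union, ← heq]
    exact Finset.inter_subset_right
  have hbAg : b ∉ A.image g := fun hmem => Finset.notMem_erase b B (hsub hmem)
  refine ⟨g, hgG, fun p hp => ?_⟩
  by_cases hpp0 : p = p0
  · subst hpp0
    have : A.image g ∩ p = A.image g ∩ p0' := by
      ext x
      simp only [Finset.mem_inter, hp0'def, Finset.mem_erase]
      constructor
      · rintro ⟨hx1, hx2⟩
        exact ⟨hx1, fun hxb => hbAg (hxb ▸ hx1), hx2⟩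
      · rintro ⟨hx1, _, hx2⟩
        exact ⟨hx1, hx2⟩
    rw [this]
    exact hg p0' (Finset.mem_insert_self _ _)
  · exact hg p (Finset.mem_insert_of_mem (Finset.mem_erase.mpr ⟨hpp0, hp⟩))
end

section
/- Suppose G is a permutation group on a finite set Ω such that the setwise stabiliser of any k-subset acts transitively on it (for some k ≥ 2), and suppose G has the (k,l)-universal transversal property for some l ≥ k. Then for any point a ∈ Ω, the point stabiliser G_a, acting on Ω∖{a}, has the (k−1,l−1)-universal transversal property. -/
variable {Ω : Type*} [Fintype Ω] [DecidableEq Ω]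

theorem point_stabiliser_ut (G : Subgroup (Equiv.Perm Ω)) (k l : ℕ)
    (hk : 2 ≤ k) (hkl : k ≤ l) (hln : l ≤ Fintype.card Ω)
    (hstab : ∀ S : Finset Ω, S.card = k → ∀ x ∈ S, ∀ y ∈ S,
      ∃ g ∈ G, S.image g = S ∧ g x = y)
    (hut : HasUT G k l) (a : Ω) :
    ∀ A B : Finset Ω, a ∉ A → a ∉ B → A.card = k - 1 → B.card = l - 1 →
      ∀ P : Finset (Finset Ω), IsKPartition P B (k - 1) →
        ∃ g ∈ G, g a = a ∧ ∀ p ∈ P, ((A.image g) ∩ p).card = 1 := by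
  intro A B haA haB hA hB P hP
  obtain ⟨hPcard, hPne, hPdisj, hPbi⟩ := hP
  have hk1 : 1 ≤ k := le_trans (by norm_num) hk
  have hl1 : 1 ≤ l := le_trans hk1 hkl
  -- a is not in any part
  have hap : ∀ p ∈ P, a ∉ p := by
    intro p hp hap
    exact haB (hPbi ▸ Finset.mem_biUnion.2 ⟨p, hp, hap⟩)
  have hsaP : ({a} : Finset Ω) ∉ P := fun h => hap _ h (Finset.mem_singleton_self a)
  set A' := insert a A with hA'
  set B' := insert a B with hB'
  set P' := insert ({a} : Finset Ω) P with hP'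
  have hA'card : A'.card = k := by
    rw [hA', Finset.card_insert_of_notMem haA, hA, Nat.sub_add_cancel hk1]
  have hB'card : B'.card = l := by
    rw [hB', Finset.card_insert_of_notMem haB, hB, Nat.sub_add_cancel hl1]
  have hP'part : IsKPartition P' B' k := by
    refine ⟨?_, ?_, ?_, ?_⟩
    · rw [hP', Finset.card_insert_of_notMem hsaP, hPcard, Nat.sub_add_cancel hk1]
    · intro p hp
      rcases Finset.mem_insert.1 hp with h | h
      · exact h ▸ ⟨a, Finset.mem_singleton_self a⟩
      · exact hPne p h
    · intro p hp q hq hpq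
      rcases Finset.mem_insert.1 hp with h | h <;> rcases Finset.mem_insert.1 hq with h' | h'
      · exact absurd (h.trans h'.symm) hpq
      · subst h
        exact Finset.disjoint_singleton_left.2 (hap q h')
      · subst h'
        exact Finset.disjoint_singleton_right.2 (hap p h)
      · exact hPdisj p h q h' hpq
    · rw [hP', Finset.biUnion_insert, hPbi, hB']
      rfl
  obtain ⟨g, hgG, hgtr⟩ := hut A' B' hA'card hB'card P' hP'part
  -- a ∈ A'.image g
  have haS : a ∈ A'.image g := by
    have h1 := hgtr {a} (Finset.mem_insert_self _ _)
    have : (A'.image g ∩ {a}).Nonempty := Finset.card_pos.1 (by rw [h1]; norm_num)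
    obtain ⟨x, hx⟩ := this
    obtain ⟨hx1, hx2⟩ := Finset.mem_inter.1 hx
    rwa [Finset.mem_singleton.1 hx2] at hx1
  have hScard : (A'.image g).card = k := by
    rw [Finset.card_image_of_injective _ g.injective, hA'card]
  have hgaS : g a ∈ A'.image g :=
    Finset.mem_image_of_mem _ (Finset.mem_insert_self _ _)
  obtain ⟨h, hhG, hhS, hha⟩ := hstab (A'.image g) hScard (g a) hgaS a haS
  refine ⟨h * g, mul_mem hhG hgG, by simp [Equiv.Perm.mul_apply, hha], ?_⟩
  have himg : A'.image (h * g) = A'.image g := by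
    rw [Equiv.Perm.coe_mul, ← Finset.image_image, hhS]
  intro p hp
  have h1 := hgtr p (Finset.mem_insert_of_mem hp)
  have h2 : A'.image (h * g) ∩ p = A.image (h * g) ∩ p := by
    rw [hA', Finset.image_insert]
    have : (h * g) a = a := by simp [Equiv.Perm.mul_apply, hha]
    rw [this, Finset.insert_inter_of_notMem (hap p hp)]
  rw [← h2, himg]
  exact h1
end

section
/- Let G be a permutation group on a finite set Ω. G has the (2,l)-universal transversal property if and only if for every orbital graph Γ of G (a graph on Ω whose edge set is a G-orbit of 2-subsets of Ω), the induced subgraph of Γ on any l-subset of Ω is connected. -/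
variable {Ω : Type*} [Fintype Ω] [DecidableEq Ω]

/-- The orbital graph of `G` whose edge set is the `G`-orbit of the `2`-subset `A₀`. -/
def orbitalGraph (G : Subgroup (Equiv.Perm Ω)) (A₀ : Finset Ω) : SimpleGraph Ω where
  Adj x y := x ≠ y ∧ ∃ g ∈ G, A₀.image g = {x, y}
  symm := by
    constructor
    intro x y ⟨hxy, g, hg, him⟩
    exact ⟨hxy.symm, g, hg, by rwa [Finset.pair_comm y x]⟩
  loopless := by constructor; intro x ⟨h, _⟩; exact h rfl

/-!
A partition of `B` into two nonempty parts is `{S, B \ S}`, and an element `g ∈ G` mapping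
`A₀` onto a transversal of it is exactly an edge of the orbital graph of `A₀` between `S` and
`B \ S`. So the `(2,l)`-universal transversal property says that every orbital graph has, on
every `l`-set `B`, an edge across every cut of `B`; since `B` is nonempty, this is connectedness
of the induced subgraph.
-/

open Finset

section

variable {α : Type*} [DecidableEq α]

theorem SimpleGraph.induce_preconnected_iff_forall_exists_adj (H : SimpleGraph α)
    (B : Finset α) :
    (H.induce (B : Set α)).Preconnected ↔
      ∀ S ⊆ B, S.Nonempty → (B \ S).Nonempty → ∃ x ∈ S, ∃ y ∈ B \ S, H.Adj x y := by
  classical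
  constructor
  · rintro hconn S hSB ⟨u, hu⟩ ⟨v, hv⟩
    obtain ⟨hvB, hvS⟩ := mem_sdiff.1 hv
    obtain ⟨w⟩ := hconn ⟨u, hSB hu⟩ ⟨v, hvB⟩
    obtain ⟨d, -, hx, hy⟩ := w.exists_boundary_dart {z | (z : α) ∈ S} hu hvS
    exact ⟨d.fst, hx, d.snd, mem_sdiff.2 ⟨d.snd.2, hy⟩, d.adj⟩
  · intro hcut u v
    by_contra huv
    let S := B.filter fun x => ∃ hx : x ∈ B, (H.induce (B : Set α)).Reachable u ⟨x, hx⟩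
    have hu : (u : α) ∈ S := mem_filter.2 ⟨u.2, u.2, .rfl⟩
    have hv : (v : α) ∈ B \ S := mem_sdiff.2 ⟨v.2, fun h => huv (mem_filter.1 h).2.2⟩
    obtain ⟨x, hxS, y, hy, hxy⟩ := hcut S (filter_subset _ _) ⟨u, hu⟩ ⟨v, hv⟩
    obtain ⟨hyB, hyS⟩ := mem_sdiff.1 hy
    obtain ⟨hxB, hux⟩ := (mem_filter.1 hxS).2
    have hadj : (H.induce (B : Set α)).Adj ⟨x, hxB⟩ ⟨y, hyB⟩ := hxy
    exact hyS (mem_filter.2 ⟨hyB, hyB, hux.trans hadj.reachable⟩)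

theorem Finset.exists_eq_pair_iff_card_inter_eq_one {T P Q : Finset α} (hT : #T = 2)
    (hPQ : Disjoint P Q) :
    (∃ x ∈ P, ∃ y ∈ Q, T = {x, y}) ↔ #(T ∩ P) = 1 ∧ #(T ∩ Q) = 1 := by
  constructor
  · rintro ⟨x, hxP, y, hyQ, rfl⟩
    have hxQ : x ∉ Q := disjoint_left.1 hPQ hxP
    have hyP : y ∉ P := disjoint_right.1 hPQ hyQ
    rw [insert_inter_of_mem hxP, singleton_inter_of_notMem hyP, pair_comm,
      insert_inter_of_mem hyQ, singleton_inter_of_notMem hxQ]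
    exact ⟨card_singleton x, card_singleton y⟩
  · rintro ⟨hP, hQ⟩
    obtain ⟨x, hx⟩ := card_eq_one.1 hP
    obtain ⟨y, hy⟩ := card_eq_one.1 hQ
    have hxTP : x ∈ T ∩ P := hx ▸ mem_singleton_self x
    have hyTQ : y ∈ T ∩ Q := hy ▸ mem_singleton_self y
    have hxy : x ≠ y := fun h =>
      disjoint_left.1 hPQ (mem_inter.1 hxTP).2 (h ▸ (mem_inter.1 hyTQ).2)
    refine ⟨x, (mem_inter.1 hxTP).2, y, (mem_inter.1 hyTQ).2, ?_⟩
    refine (eq_of_subset_of_card_le ?_ (by rw [hT, card_pair hxy])).symm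
    exact insert_subset (mem_inter.1 hxTP).1 (singleton_subset_iff.2 (mem_inter.1 hyTQ).1)

theorem isKPartition_two_iff {P : Finset (Finset α)} {B : Finset α} :
    IsKPartition P B 2 ↔ ∃ S ⊆ B, S.Nonempty ∧ (B \ S).Nonempty ∧ P = {S, B \ S} := by
  constructor
  · rintro ⟨hcard, hne, hdisj, hunion⟩
    obtain ⟨S, T, hST, rfl⟩ := card_eq_two.1 hcard
    have hS : S ∈ ({S, T} : Finset (Finset α)) := mem_insert_self S {T}
    have hT : T ∈ ({S, T} : Finset (Finset α)) := mem_insert_of_mem (mem_singleton_self T)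
    have hB : S ∪ T = B := by simpa using hunion
    have hBS : B \ S = T := hB ▸ union_sdiff_cancel_left (hdisj S hS T hT hST)
    exact ⟨S, hB ▸ subset_union_left, hne S hS, hBS ▸ hne T hT, by rw [hBS]⟩
  · rintro ⟨S, hSB, hS, hBS, rfl⟩
    have hST : S ≠ B \ S := by
      obtain ⟨v, hv⟩ := hBS
      exact fun h => (mem_sdiff.1 hv).2 (by rwa [← h] at hv)
    refine ⟨card_pair hST, ?_, ?_, ?_⟩
    · simp only [mem_insert, mem_singleton, forall_eq_or_imp, forall_eq]
      exact ⟨hS, hBS⟩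
    · simp only [mem_insert, mem_singleton, forall_eq_or_imp, forall_eq, ne_eq,
        not_true_eq_false, IsEmpty.forall_iff, true_and, and_true]
      exact ⟨fun _ => disjoint_sdiff, fun _ => sdiff_disjoint⟩
    · simpa using union_sdiff_of_subset hSB

theorem exists_transversal_iff_exists_orbitalGraph_adj (G : Subgroup (Equiv.Perm α))
    {A₀ : Finset α} (hA₀ : #A₀ = 2) (S B : Finset α) :
    (∃ g ∈ G, ∀ p ∈ ({S, B \ S} : Finset (Finset α)), #(A₀.image g ∩ p) = 1) ↔
      ∃ x ∈ S, ∃ y ∈ B \ S, (orbitalGraph G A₀).Adj x y := by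
  have hcard (g : Equiv.Perm α) : #(A₀.image g) = 2 := by
    rw [card_image_of_injective _ g.injective, hA₀]
  simp only [mem_insert, mem_singleton, forall_eq_or_imp, forall_eq,
    ← exists_eq_pair_iff_card_inter_eq_one (hcard _) disjoint_sdiff]
  constructor
  · rintro ⟨g, hg, x, hx, y, hy, hxy⟩
    exact ⟨x, hx, y, hy, fun h => (mem_sdiff.1 hy).2 (h ▸ hx), g, hg, hxy⟩
  · rintro ⟨x, hx, y, hy, -, g, hg, hxy⟩
    exact ⟨g, hg, x, hx, y, hy, hxy⟩

theorem hasUT_two_iff (G : Subgroup (Equiv.Perm α)) (l : ℕ) :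
    HasUT G 2 l ↔
      ∀ A₀ : Finset α, #A₀ = 2 → ∀ B : Finset α, #B = l →
        ∀ S ⊆ B, S.Nonempty → (B \ S).Nonempty →
          ∃ x ∈ S, ∃ y ∈ B \ S, (orbitalGraph G A₀).Adj x y := by
  refine ⟨fun hUT A₀ hA₀ B hB S hSB hS hBS => ?_, fun h A₀ B hA₀ hB P hP => ?_⟩
  · exact (exists_transversal_iff_exists_orbitalGraph_adj G hA₀ S B).1
      (hUT A₀ B hA₀ hB _ (isKPartition_two_iff.2 ⟨S, hSB, hS, hBS, rfl⟩))
  · obtain ⟨S, hSB, hS, hBS, rfl⟩ := isKPartition_two_iff.1 hP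
    exact (exists_transversal_iff_exists_orbitalGraph_adj G hA₀ S B).2
      (h A₀ hA₀ B hB S hSB hS hBS)

end

theorem ut_two_iff_induced_connected_general (G : Subgroup (Equiv.Perm Ω)) (l : ℕ)
    (hl : 2 ≤ l) :
    HasUT G 2 l ↔
      ∀ A₀ : Finset Ω, A₀.card = 2 → ∀ B : Finset Ω, B.card = l →
        ((orbitalGraph G A₀).induce (B : Set Ω)).Connected := by
  rw [hasUT_two_iff]
  refine forall₄_congr fun A₀ _ B hB => ?_
  have hBne : Nonempty (B : Set Ω) := (card_pos.1 (by omega)).coe_sort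
  rw [SimpleGraph.connected_iff, SimpleGraph.induce_preconnected_iff_forall_exists_adj]
  exact (and_iff_left hBne).symm

theorem ut_two_iff_induced_connected (G : Subgroup (Equiv.Perm Ω)) (l : ℕ)
    (hl : 2 ≤ l) (hln : l ≤ Fintype.card Ω) :
    HasUT G 2 l ↔
      ∀ A₀ : Finset Ω, A₀.card = 2 → ∀ B : Finset Ω, B.card = l →
        ((orbitalGraph G A₀).induce (B : Set Ω)).Connected :=
  ut_two_iff_induced_connected_general G l hl
end

section
/- Let u be a partial transformation of a finite set Ω and G a group of permutations of Ω. If u is regular in the monoid ⟨G,u⟩ generated by G and u (i.e., there exists b ∈ ⟨G,u⟩ with u = u∘b∘u), then there exists g ∈ G such that rank(u∘g∘u) = rank(u). -/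
variable {Ω : Type*} [Fintype Ω] [DecidableEq Ω]

/-- A partial transformation of `Ω`, encoded as a function `Ω → Option Ω`. -/
def PT (Ω : Type*) := Ω → Option Ω

/-- Composition of partial transformations: apply `f` first, then `g`. -/
def pcomp (f g : PT Ω) : PT Ω := fun x => (f x).bind g

/-- A permutation viewed as a (total) partial transformation. -/
def ofPerm (g : Equiv.Perm Ω) : PT Ω := fun x => some (g x)

/-- The rank of a partial transformation: the cardinality of its image. -/
noncomputable def rank (u : PT Ω) : ℕ := {y : Ω | ∃ x : Ω, u x = some y}.ncard

/-- The domain of a partial transformation. -/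
def dom (u : PT Ω) : Set Ω := {x : Ω | u x ≠ none}

/-- Membership in the subsemigroup of `PT Ω` generated by a set `S`. -/
inductive InGen (S : Set (PT Ω)) : PT Ω → Prop
  | base {s : PT Ω} : s ∈ S → InGen S s
  | mul {a b : PT Ω} : InGen S a → InGen S b → InGen S (pcomp a b)

/-- The generating set consisting of the permutations of `G` together with `t`. -/
def gens (G : Subgroup (Equiv.Perm Ω)) (t : PT Ω) : Set (PT Ω) :=
  {f : PT Ω | (∃ g ∈ G, f = ofPerm g) ∨ f = t}

/-! Every element of `⟨G, u⟩` is either a permutation `g ∈ G` or has the form `g u c` with `g ∈ G`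
(composition read left to right). In the first case `u = u g u` outright. In the second
`u = u (g u c) u = (u g u)(c u)`, so `rank u ≤ rank (u g u) ≤ rank u`. -/

section Composition

omit [Fintype Ω] [DecidableEq Ω]

lemma pcomp_assoc (a b c : PT Ω) : pcomp (pcomp a b) c = pcomp a (pcomp b c) := by
  funext x
  simp only [pcomp]
  cases a x <;> rfl

lemma ofPerm_pcomp_ofPerm (g₁ g₂ : Equiv.Perm Ω) :
    pcomp (ofPerm g₁) (ofPerm g₂) = ofPerm (g₂ * g₁) :=
  rfl

lemma ofPerm_one_pcomp (u : PT Ω) : pcomp (ofPerm 1) u = u :=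
  rfl

lemma pcomp_ofPerm_one (u : PT Ω) : pcomp u (ofPerm 1) = u := by
  funext x
  simp only [pcomp]
  cases u x <;> rfl

variable [Finite Ω]

lemma rank_pcomp_le_right (f h : PT Ω) : rank (pcomp f h) ≤ rank h := by
  refine Set.ncard_le_ncard ?_ (Set.toFinite _)
  rintro y ⟨x, hx⟩
  obtain ⟨z, -, hz⟩ := Option.bind_eq_some_iff.mp hx
  exact ⟨z, hz⟩

lemma rank_pcomp_le_left (f h : PT Ω) : rank (pcomp f h) ≤ rank f := by
  have hsub : {y | ∃ x, pcomp f h x = some y} ⊆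
      (fun z => (h z).getD z) '' {z | ∃ x, f x = some z} := by
    rintro y ⟨x, hx⟩
    obtain ⟨z, hfz, hhz⟩ := Option.bind_eq_some_iff.mp hx
    exact ⟨z, ⟨x, hfz⟩, by simp [hhz]⟩
  calc rank (pcomp f h) ≤ ((fun z => (h z).getD z) '' {z | ∃ x, f x = some z}).ncard :=
        Set.ncard_le_ncard hsub (Set.toFinite _)
    _ ≤ rank f := Set.ncard_image_le (Set.toFinite _)

end Composition

omit [Fintype Ω] [DecidableEq Ω] in
lemma InGen.eq_ofPerm_or_eq_ofPerm_pcomp {G : Subgroup (Equiv.Perm Ω)} {u b : PT Ω}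
    (hb : InGen (gens G u) b) :
    (∃ g ∈ G, b = ofPerm g) ∨ ∃ g ∈ G, ∃ c, b = pcomp (pcomp (ofPerm g) u) c := by
  induction hb with
  | base hs =>
    rcases hs with ⟨g, hg, rfl⟩ | rfl
    · exact Or.inl ⟨g, hg, rfl⟩
    · exact Or.inr ⟨1, one_mem _, ofPerm 1, by rw [ofPerm_one_pcomp, pcomp_ofPerm_one]⟩
  | mul _ _ iha ihb =>
    rcases iha with ⟨g₁, hg₁, rfl⟩ | ⟨g, hg, c, rfl⟩
    · rcases ihb with ⟨g₂, hg₂, rfl⟩ | ⟨g₂, hg₂, c, rfl⟩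
      · exact Or.inl ⟨g₂ * g₁, mul_mem hg₂ hg₁, ofPerm_pcomp_ofPerm g₁ g₂⟩
      · refine Or.inr ⟨g₂ * g₁, mul_mem hg₂ hg₁, c, ?_⟩
        simp only [← ofPerm_pcomp_ofPerm, pcomp_assoc]
    · exact Or.inr ⟨g, hg, _, pcomp_assoc _ _ _⟩

theorem regular_implies_rank_eq (G : Subgroup (Equiv.Perm Ω)) (u : PT Ω)
    (h : ∃ b : PT Ω, InGen (gens G u) b ∧ u = pcomp (pcomp u b) u) :
    ∃ g ∈ G, rank (pcomp (pcomp u (ofPerm g)) u) = rank u := by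
  obtain ⟨b, hb, hu⟩ := h
  rcases hb.eq_ofPerm_or_eq_ofPerm_pcomp with ⟨g, hg, rfl⟩ | ⟨g, hg, c, rfl⟩
  · exact ⟨g, hg, congrArg rank hu.symm⟩
  · refine ⟨g, hg, le_antisymm (rank_pcomp_le_right _ _) ?_⟩
    have hu' : u = pcomp (pcomp (pcomp u (ofPerm g)) u) (pcomp c u) := by
      conv_lhs => rw [hu]
      simp only [pcomp_assoc]
    calc rank u = rank (pcomp (pcomp (pcomp u (ofPerm g)) u) (pcomp c u)) := congrArg rank hu'
      _ ≤ rank (pcomp (pcomp u (ofPerm g)) u) := rank_pcomp_le_left _ _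
end

section
/- Let u be a partial transformation of a finite set Ω and G a group of permutations of Ω. If there exists g ∈ G with rank(u∘g∘u) = rank(u), then u is regular in the semigroup ⟨G,u⟩, i.e., there exists b ∈ ⟨G,u⟩ with u = u∘b∘u. -/
variable {Ω : Type*} [Fintype Ω] [DecidableEq Ω]

/-!
Write `f = u ∘ g` (apply `g` first). The image of `u ∘ g ∘ u` is the image of `S = im u` under `f`,
a subset of `S`; equality of ranks makes it all of `S`. Choosing a preimage in `S` of each point of
`S` gives an injective, hence bijective, self-map of the finite set `S`, so `f` restricts to a
permutation of `S`. If `k ≥ 1` is its order, `f ^ k` fixes `S` pointwise, so `f ^ k ∘ u = u`, and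
`b = g ∘ f ^ (k - 1)` lies in `⟨G, u⟩` with `u ∘ b ∘ u = f ^ k ∘ u = u`.
-/

namespace PT

variable {α : Type*}

/-- Multiplication is composition in the usual order: `(a * b) x = a (b x)`. -/
instance : Mul (PT α) := ⟨fun a b => pcomp b a⟩

instance : One (PT α) := ⟨fun x => some x⟩

theorem mul_apply (a b : PT α) (x : α) : (a * b) x = (b x).bind a := rfl

theorem mul_apply_of_eq_some {a b : PT α} {x y : α} (h : b x = some y) : (a * b) x = a y := by
  rw [mul_apply, h]
  rfl

theorem mul_apply_eq_some_iff {a b : PT α} {x z : α} :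
    (a * b) x = some z ↔ ∃ y, b x = some y ∧ a y = some z :=
  Option.bind_eq_some_iff

instance : Monoid (PT α) where
  mul_assoc a b c := funext fun x => (Option.bind_assoc (c x) b a).symm
  one_mul a := funext fun x => Option.bind_fun_some (a x)
  mul_one _ := rfl

theorem ofPerm_one : ofPerm (1 : Equiv.Perm α) = 1 := rfl

def range (u : PT α) : Set α := {y | ∃ x, u x = some y}

theorem rank_eq_ncard_range (u : PT α) : rank u = (range u).ncard := rfl

theorem mem_range_mul {a b : PT α} {z : α} : z ∈ range (a * b) ↔ ∃ y ∈ range b, a y = some z := by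
  simp only [range, Set.mem_ofPred_eq, mul_apply_eq_some_iff]
  constructor
  · rintro ⟨x, y, hxy, hyz⟩
    exact ⟨y, ⟨x, hxy⟩, hyz⟩
  · rintro ⟨y, ⟨x, hxy⟩, hyz⟩
    exact ⟨x, y, hxy, hyz⟩

theorem range_mul_subset (a b : PT α) : range (a * b) ⊆ range a := by
  rintro z hz
  obtain ⟨y, -, hyz⟩ := mem_range_mul.mp hz
  exact ⟨y, hyz⟩

theorem mul_eq_right_of_eqOn_range {u v : PT α} (hv : ∀ y ∈ range u, v y = some y) :
    v * u = u := by
  funext x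
  cases hx : u x with
  | none => rw [mul_apply, hx]; rfl
  | some y => rw [mul_apply_of_eq_some hx, hv y ⟨x, hx⟩]

theorem pow_apply_of_perm {S : Set α} {h : PT α} {ρ : Equiv.Perm S}
    (hρ : ∀ y : S, h y = some ↑(ρ y)) (n : ℕ) (y : S) : (h ^ n) y = some ↑((ρ ^ n) y) := by
  induction n generalizing y with
  | zero => rfl
  | succ n ih =>
    rw [pow_succ, pow_succ, Equiv.Perm.mul_apply, ← ih]
    exact mul_apply_of_eq_some (hρ y)

theorem exists_perm_of_surjOn {S : Set α} [Finite S] {h : PT α}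
    (hsurj : ∀ z ∈ S, ∃ y ∈ S, h y = some z) : ∃ ρ : Equiv.Perm S, ∀ y : S, h y = some ↑(ρ y) := by
  choose σ hσS hσ using hsurj
  let σ' : S → S := fun z => ⟨σ z z.2, hσS z z.2⟩
  have hσ'_inj : Function.Injective σ' := fun z w hzw => by
    apply Subtype.ext
    apply Option.some_injective
    rw [← hσ z z.2, ← hσ w w.2]
    exact congrArg (fun y : S => h y) hzw
  let e := Equiv.ofBijective σ' (Finite.injective_iff_bijective.mp hσ'_inj)
  refine ⟨e.symm, fun y => ?_⟩
  conv_lhs => rw [← e.apply_symm_apply y]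
  exact hσ _ (e.symm y).2

theorem exists_pow_eq_one_on {S : Set α} [Finite S] {h : PT α}
    (hsurj : ∀ z ∈ S, ∃ y ∈ S, h y = some z) : ∃ k ≠ 0, ∀ y ∈ S, (h ^ k) y = some y := by
  obtain ⟨ρ, hρ⟩ := exists_perm_of_surjOn hsurj
  refine ⟨orderOf ρ, (orderOf_pos ρ).ne', fun y hy => ?_⟩
  simpa [pow_orderOf_eq_one] using pow_apply_of_perm hρ (orderOf ρ) ⟨y, hy⟩

end PT

theorem InGen.mul' {α : Type*} {S : Set (PT α)} {a b : PT α} (ha : InGen S a) (hb : InGen S b) :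
    InGen S (a * b) :=
  InGen.mul hb ha

theorem InGen.pow {α : Type*} {S : Set (PT α)} (hS : 1 ∈ S) {a : PT α} (ha : InGen S a) :
    ∀ n : ℕ, InGen S (a ^ n)
  | 0 => InGen.base hS
  | n + 1 => by rw [pow_succ]; exact (InGen.pow hS ha n).mul' ha

open PT in
theorem rank_eq_implies_regular (G : Subgroup (Equiv.Perm Ω)) (u : PT Ω)
    (h : ∃ g ∈ G, rank (pcomp (pcomp u (ofPerm g)) u) = rank u) :
    ∃ b : PT Ω, InGen (gens G u) b ∧ u = pcomp (pcomp u b) u := by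
  obtain ⟨g, hg, hrank⟩ := h
  set f := u * ofPerm g
  have hrange : range (f * u) = range u := by
    refine Set.eq_of_subset_of_ncard_le
      ((range_mul_subset f u).trans (range_mul_subset u _)) ?_ (Set.toFinite _)
    rw [← rank_eq_ncard_range, ← rank_eq_ncard_range, mul_assoc]
    exact hrank.ge
  obtain ⟨k, hk, hfk⟩ := exists_pow_eq_one_on (S := range u) (h := f) fun z hz => by
    rw [← hrange] at hz
    exact mem_range_mul.mp hz
  have hg_mem : InGen (gens G u) (ofPerm g) := .base (Or.inl ⟨g, hg, rfl⟩)
  have hu_mem : InGen (gens G u) u := .base (Or.inr rfl)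
  have hone_mem : (1 : PT Ω) ∈ gens G u := Or.inl ⟨1, G.one_mem, ofPerm_one.symm⟩
  refine ⟨ofPerm g * f ^ (k - 1), hg_mem.mul' ((hu_mem.mul' hg_mem).pow hone_mem _), ?_⟩
  show u = u * (ofPerm g * f ^ (k - 1) * u)
  calc u = f ^ k * u := (mul_eq_right_of_eqOn_range hfk).symm
    _ = u * (ofPerm g * f ^ (k - 1) * u) := by simp only [← mul_pow_sub_one hk, f, mul_assoc]
end

section
/- Let u be a partial transformation of a finite set Ω with rank r, and let g be a permutation of Ω such that rank(u∘g∘u) = rank(u). Then for every positive integer m, rank((u∘g)^m) = rank(u). -/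
/-
Write `f = u ∘ g` and `R = image u`. Since `image (u ∘ g ∘ u) ⊆ R` and both have the same finite
size, `u` maps `image f = R·g` onto `R`, hence `f` maps `image f` onto itself. So every power
`f^m` with `m ≥ 1` has image `image f = R·g`, of size `|R|` because `g` is injective.
-/

variable {Ω : Type*} [Fintype Ω] [DecidableEq Ω]

/-- `ppow f m` is the `m`-th power of `f` under `pcomp` (with `ppow f 0` the identity). -/
def ppow (f : PT Ω) : ℕ → PT Ω
  | 0 => fun x => some x
  | (m + 1) => pcomp (ppow f m) f

open Set

namespace PT

variable {α : Type*}

def image (u : PT α) (S : Set α) : Set α := {y | ∃ x ∈ S, u x = some y}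

theorem image_mono (u : PT α) {S T : Set α} (hST : S ⊆ T) : u.image S ⊆ u.image T := by
  rintro y ⟨x, hx, hxy⟩
  exact ⟨x, hST hx, hxy⟩

theorem pcomp_eq_some_iff {f g : PT α} {x z : α} :
    pcomp f g x = some z ↔ ∃ y, f x = some y ∧ g y = some z :=
  Option.bind_eq_some_iff

theorem image_pcomp (f g : PT α) (S : Set α) : (pcomp f g).image S = g.image (f.image S) := by
  ext z
  simp only [image, mem_ofPred_eq, pcomp_eq_some_iff]
  constructor
  · rintro ⟨x, hx, y, hxy, hyz⟩
    exact ⟨y, ⟨x, hx, hxy⟩, hyz⟩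
  · rintro ⟨y, ⟨x, hx, hxy⟩, hyz⟩
    exact ⟨x, hx, y, hxy, hyz⟩

theorem image_ofPerm (g : Equiv.Perm α) (S : Set α) : (ofPerm g).image S = g '' S := by
  ext y
  simp [image, ofPerm, Set.image]

theorem image_ppow_zero (f : PT α) (S : Set α) : (ppow f 0).image S = S := by
  ext y
  simp [image, ppow]

theorem image_ppow_succ (f : PT α) (m : ℕ) (S : Set α) :
    (ppow f (m + 1)).image S = f.image ((ppow f m).image S) :=
  image_pcomp _ _ _

theorem image_univ_ppow_succ {f : PT α} (hf : f.image (f.image univ) = f.image univ) (m : ℕ) :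
    (ppow f (m + 1)).image univ = f.image univ := by
  induction m with
  | zero => rw [image_ppow_succ, image_ppow_zero]
  | succ m ih => rw [image_ppow_succ, ih, hf]

theorem rank_eq_ncard_image_univ (u : PT α) : rank u = (u.image univ).ncard := by
  simp [rank, image]

theorem rank_pcomp_ofPerm (u : PT α) (g : Equiv.Perm α) : rank (pcomp u (ofPerm g)) = rank u := by
  rw [rank_eq_ncard_image_univ, image_pcomp, image_ofPerm, ncard_image_of_injective _ g.injective,
    rank_eq_ncard_image_univ]

theorem image_image_univ_eq_of_rank_pcomp_eq [Finite α] {f u : PT α} (h : rank (pcomp f u) = rank u) :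
    u.image (f.image univ) = u.image univ := by
  refine eq_of_subset_of_ncard_le (u.image_mono (subset_univ _)) ?_ (toFinite _)
  rw [← image_pcomp, ← rank_eq_ncard_image_univ, ← rank_eq_ncard_image_univ, h]

end PT

open PT

theorem rank_pow_eq (u : PT Ω) (g : Equiv.Perm Ω)
    (h : rank (pcomp (pcomp u (ofPerm g)) u) = rank u) :
    ∀ m : ℕ, 1 ≤ m → rank (ppow (pcomp u (ofPerm g)) m) = rank u := by
  set f := pcomp u (ofPerm g)
  have hf : f.image (f.image univ) = f.image univ := by
    rw [image_pcomp u (ofPerm g) (f.image univ), image_image_univ_eq_of_rank_pcomp_eq h,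
      ← image_pcomp]
  intro m hm
  obtain ⟨k, rfl⟩ := Nat.exists_eq_add_of_le' hm
  rw [rank_eq_ncard_image_univ, image_univ_ppow_succ hf, ← rank_eq_ncard_image_univ,
    rank_pcomp_ofPerm]
end

section
/- Let G be a permutation group on a finite set Ω of size n with k ≤ max(⌊(n+1)/2⌋, n−6), and suppose there is a nonempty G-invariant family E of k-subsets of Ω (a regular k-uniform hypergraph) such that every (k−1)-subset of Ω is contained in exactly d members of E. If G is (k−1)-homogeneous and k ≤ l ≤ n−d, then G does not have the (k,l)-universal transversal property. -/
variable {Ω : Type*} [Fintype Ω] [DecidableEq Ω]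

/-!
Take an edge `A` and a `(k-1)`-set `K`. By regularity exactly `d` points `x ∉ K` extend `K` to an
edge `K ∪ {x}`, so at least `n - (k-1) - d ≥ l - (k-1)` points do not. Let `C` be `l - (k-1)` of
these non-extending points and partition `B = K ∪ C` into the singletons of `K` and the block `C`.
A transversal of this partition of size `k` contains `K` and exactly one point `x ∈ C`, so it is
`K ∪ {x}`, which is not an edge. Since `E` is `G`-invariant, no image of `A` under `G` is such a
transversal.
-/

namespace Finset

section Extensions

variable (E : Finset (Finset Ω)) (K : Finset Ω)

theorem card_filter_insert_mem_eq (hE : ∀ A ∈ E, A.card = K.card + 1) :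
    ((univ \ K).filter (insert · K ∈ E)).card = (E.filter (K ⊆ ·)).card := by
  refine card_bij (fun x _ => insert x K) ?_ ?_ ?_
  · intro x hx
    simp only [mem_filter] at hx ⊢
    exact ⟨hx.2, subset_insert x K⟩
  · intro x hx y hy hxy
    simp only [mem_filter, mem_sdiff] at hx hy
    have hxy' : x ∈ insert y K := hxy ▸ mem_insert_self x K
    simpa [hx.1.2] using hxy'
  · intro A hA
    rw [mem_filter] at hA
    obtain ⟨x, hxK, rfl⟩ := exists_eq_insert_iff.2 ⟨hA.2, (hE A hA.1).symm⟩
    exact ⟨x, by simpa [hxK] using hA.1, rfl⟩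

theorem card_filter_insert_notMem_add_card_filter_subset (hE : ∀ A ∈ E, A.card = K.card + 1) :
    ((univ \ K).filter (insert · K ∉ E)).card + (E.filter (K ⊆ ·)).card =
      Fintype.card Ω - K.card := by
  rw [← card_filter_insert_mem_eq E K hE, add_comm, card_filter_add_card_filter_not,
    card_sdiff_of_subset (subset_univ K), card_univ]

end Extensions

section SingletonsAndBlock

variable {K C : Finset Ω}

omit [Fintype Ω] in
theorem isKPartition_insert_image_singleton (hC : C.Nonempty) (hKC : Disjoint K C) :
    IsKPartition (insert C (K.image singleton)) (K ∪ C) (K.card + 1) := by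
  have hCnotMem : C ∉ K.image singleton := by
    intro h
    obtain ⟨x, hxK, rfl⟩ := mem_image.1 h
    exact disjoint_left.1 hKC hxK (mem_singleton_self x)
  refine ⟨?_, ?_, ?_, ?_⟩
  · rw [card_insert_of_notMem hCnotMem, card_image_of_injective _ singleton_injective]
  · simp only [mem_insert, mem_image]
    rintro p (rfl | ⟨x, -, rfl⟩)
    exacts [hC, singleton_nonempty x]
  · simp only [mem_insert, mem_image]
    rintro p (rfl | ⟨x, hx, rfl⟩) q (rfl | ⟨y, hy, rfl⟩) hpq
    · exact absurd rfl hpq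
    · exact disjoint_singleton_right.2 fun hyp => disjoint_left.1 hKC hy hyp
    · exact disjoint_singleton_left.2 fun hxq => disjoint_left.1 hKC hx hxq
    · exact disjoint_singleton.2 fun hxy => hpq (hxy ▸ rfl)
  · ext x
    simp [or_comm]

omit [Fintype Ω] in
theorem exists_eq_insert_of_transversal {A : Finset Ω} (hKC : Disjoint K C)
    (hA : A.card = K.card + 1) (hT : ∀ p ∈ insert C (K.image singleton), (A ∩ p).card = 1) :
    ∃ x ∈ C, A = insert x K := by
  have hKA : K ⊆ A := fun y hy => by
    have hy1 := hT {y} (mem_insert_of_mem (mem_image_of_mem _ hy))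
    by_contra hyA
    simp [inter_singleton_of_notMem hyA] at hy1
  obtain ⟨x, hx⟩ := card_eq_one.1 (hT C (mem_insert_self C _))
  have hxAC : x ∈ A ∩ C := hx ▸ mem_singleton_self x
  rw [mem_inter] at hxAC
  have hxK : x ∉ K := disjoint_right.1 hKC hxAC.2
  refine ⟨x, hxAC.2, (eq_of_subset_of_card_le (insert_subset hxAC.1 hKA) ?_).symm⟩
  rw [card_insert_of_notMem hxK, hA]

end SingletonsAndBlock

end Finset

open Finset in
theorem hypergraph_valency_bound_general (G : Subgroup (Equiv.Perm Ω)) (k l d : ℕ)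
    (hk : 3 ≤ k)
    (E : Finset (Finset Ω)) (hEne : E.Nonempty)
    (huniform : ∀ A ∈ E, A.card = k)
    (hinv : ∀ g ∈ G, ∀ A ∈ E, A.image g ∈ E)
    (hreg : ∀ K : Finset Ω, K.card = k - 1 → (E.filter (fun A => K ⊆ A)).card = d)
    (hkl : k ≤ l) (hld : l ≤ Fintype.card Ω - d) :
    ¬ HasUT G k l := by
  intro hut
  obtain ⟨A, hA⟩ := hEne
  have hkn : k ≤ Fintype.card Ω := huniform A hA ▸ card_le_univ A
  obtain ⟨K, -, hK⟩ := exists_subset_card_eq (s := (univ : Finset Ω)) (n := k - 1)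
    (by rw [card_univ]; omega)
  have hKk : K.card + 1 = k := by omega
  set nonext := (univ \ K).filter (insert · K ∉ E)
  have hcount : nonext.card + d = Fintype.card Ω - K.card :=
    hreg K hK ▸ card_filter_insert_notMem_add_card_filter_subset E K (hKk ▸ huniform)
  obtain ⟨C, hC, hCcard⟩ := exists_subset_card_eq (s := nonext) (n := l - (k - 1)) (by omega)
  have hKC : Disjoint K C :=
    disjoint_right.2 fun x hx => (mem_sdiff.1 (mem_filter.1 (hC hx)).1).2
  have hCne : C.Nonempty := card_pos.1 (by omega)
  have hB : (K ∪ C).card = l := by rw [card_union_of_disjoint hKC]; omega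
  obtain ⟨g, hg, hT⟩ := hut A (K ∪ C) (huniform A hA) hB _
    (hKk ▸ isKPartition_insert_image_singleton hCne hKC)
  have hgA : A.image g ∈ E := hinv g hg A hA
  obtain ⟨x, hxC, hx⟩ := exists_eq_insert_of_transversal hKC (hKk ▸ huniform _ hgA) hT
  exact (mem_filter.1 (hC hxC)).2 (hx ▸ hgA)

theorem hypergraph_valency_bound (G : Subgroup (Equiv.Perm Ω)) (k l d : ℕ)
    (hk : 3 ≤ k)
    (hkmax : k ≤ max ((Fintype.card Ω + 1) / 2) (Fintype.card Ω - 6))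
    (E : Finset (Finset Ω)) (hEne : E.Nonempty)
    (huniform : ∀ A ∈ E, A.card = k)
    (hinv : ∀ g ∈ G, ∀ A ∈ E, A.image g ∈ E)
    (hreg : ∀ K : Finset Ω, K.card = k - 1 → (E.filter (fun A => K ⊆ A)).card = d)
    (hhom : IsHomogeneous G (k - 1))
    (hkl : k ≤ l) (hld : l ≤ Fintype.card Ω - d) :
    ¬ HasUT G k l :=
  hypergraph_valency_bound_general G k l d hk E hEne huniform hinv hreg hkl hld
end

section
/- Let G be a transitive permutation group on a finite set Ω of size n that is not 2-homogeneous. Then G fails the (2,l)-universal transversal property for every l ≤ (n+1)/2; equivalently the threshold satisfies t(G,2) ≥ (n+3)/2. -/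
variable {Ω : Type*} [Fintype Ω] [DecidableEq Ω]

/-!
Fix a point `v`. For a `2`-set `A`, let `N_A(v)` be the set of neighbours of `v` in the orbital
graph of the `G`-orbit of `A`. If `A` and `B` lie in different orbits, `N_A(v)` and `N_B(v)` are
disjoint subsets of `Ω \ {v}`, so one of them, say `N_A(v)`, has at most `(n - 1) / 2` elements,
where `n = |Ω|`. For `l ≤ (n + 1) / 2` there are then `l - 1` points `S` outside `N_A(v) ∪ {v}`,
and no image of `A` is a transversal of the partition `{{v}, S}`: it would be an edge `{v, s}` with
`s ∈ S`.
-/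

open Finset

theorem isKPartition_pair {α : Type*} [DecidableEq α] {s t : Finset α} (hs : s.Nonempty)
    (ht : t.Nonempty) (hst : Disjoint s t) : IsKPartition {s, t} (s ∪ t) 2 := by
  have hne : s ≠ t := by
    rintro rfl
    exact hs.ne_empty (disjoint_self_iff_empty s |>.mp hst)
  refine ⟨card_pair hne, ?_, ?_, ?_⟩
  · simp only [mem_insert, mem_singleton]
    rintro p (rfl | rfl) <;> assumption
  · simp only [mem_insert, mem_singleton]
    rintro p (rfl | rfl) q (rfl | rfl) hpq <;>
      first | exact absurd rfl hpq | exact hst | exact hst.symm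
  · simp [biUnion_insert]

section OrbitalGraph

variable (G : Subgroup (Equiv.Perm Ω))

open Classical in
noncomputable def orbitalNeighbors (A : Finset Ω) (v : Ω) : Finset Ω :=
  univ.filter fun u => u ≠ v ∧ ∃ g ∈ G, A.image g = {v, u}

variable {G}

theorem mem_orbitalNeighbors {A : Finset Ω} {v u : Ω} :
    u ∈ orbitalNeighbors G A v ↔ u ≠ v ∧ ∃ g ∈ G, A.image g = {v, u} := by
  simp [orbitalNeighbors]

theorem orbitalNeighbors_subset_erase (A : Finset Ω) (v : Ω) :
    orbitalNeighbors G A v ⊆ univ.erase v := fun _ hu =>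
  mem_erase.mpr ⟨(mem_orbitalNeighbors.mp hu).1, mem_univ _⟩

theorem disjoint_orbitalNeighbors {A B : Finset Ω} (hAB : ∀ g ∈ G, A.image g ≠ B) (v : Ω) :
    Disjoint (orbitalNeighbors G A v) (orbitalNeighbors G B v) := by
  refine disjoint_left.mpr fun u huA huB => ?_
  obtain ⟨-, g, hg, hgA⟩ := mem_orbitalNeighbors.mp huA
  obtain ⟨-, g', hg', hg'B⟩ := mem_orbitalNeighbors.mp huB
  refine hAB (g'⁻¹ * g) (mul_mem (inv_mem hg') hg) ?_
  calc A.image ⇑(g'⁻¹ * g) = (A.image g).image ⇑g'⁻¹ := by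
        rw [image_image, Equiv.Perm.coe_mul]
    _ = (B.image g').image ⇑g'⁻¹ := by rw [hgA, hg'B]
    _ = B := by simp [image_image, Function.comp_def]

theorem card_orbitalNeighbors_add_card_le {A B : Finset Ω} (hAB : ∀ g ∈ G, A.image g ≠ B)
    (v : Ω) :
    #(orbitalNeighbors G A v) + #(orbitalNeighbors G B v) ≤ Fintype.card Ω - 1 := by
  rw [← card_union_of_disjoint (disjoint_orbitalNeighbors hAB v), ← card_univ,
    ← card_erase_of_mem (mem_univ v)]
  exact card_le_card (union_subset (orbitalNeighbors_subset_erase A v)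
    (orbitalNeighbors_subset_erase B v))

theorem mem_orbitalNeighbors_of_mem_image {A : Finset Ω} (hA : #A = 2) {g : Equiv.Perm Ω}
    (hg : g ∈ G) {v s : Ω} (hv : v ∈ A.image g) (hs : s ∈ A.image g) (hsv : s ≠ v) :
    s ∈ orbitalNeighbors G A v := by
  refine mem_orbitalNeighbors.mpr ⟨hsv, g, hg, ?_⟩
  refine (eq_of_subset_of_card_le (insert_subset hv (singleton_subset_iff.mpr hs)) ?_).symm
  rw [card_image_of_injective _ g.injective, hA, card_pair hsv.symm]

theorem not_hasUT_of_card_orbitalNeighbors_add_le {A : Finset Ω} (hA : #A = 2) (v : Ω) {l : ℕ}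
    (hl : 2 ≤ l) (hcard : #(orbitalNeighbors G A v) + l ≤ Fintype.card Ω) :
    ¬ HasUT G 2 l := by
  intro hUT
  set T := univ \ insert v (orbitalNeighbors G A v)
  obtain ⟨S, hST, hS⟩ : ∃ S ⊆ T, #S = l - 1 := by
    refine exists_subset_card_eq ?_
    have := card_insert_le v (orbitalNeighbors G A v)
    rw [card_sdiff_of_subset (subset_univ _), card_univ]
    omega
  have hvS : Disjoint {v} S := disjoint_singleton_left.mpr fun hv => by simpa [T] using hST hv
  have hSne : S.Nonempty := card_pos.mp (by omega)
  have hB : #({v} ∪ S) = l := by rw [card_union_of_disjoint hvS, card_singleton]; omega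
  obtain ⟨g, hg, htransversal⟩ :=
    hUT A _ hA hB _ (isKPartition_pair (singleton_nonempty v) hSne hvS)
  obtain ⟨v', hv'⟩ := card_pos.mp ((htransversal {v} (by simp)).symm ▸ one_pos)
  obtain ⟨s, hs⟩ := card_pos.mp ((htransversal S (by simp)).symm ▸ one_pos)
  rw [mem_inter, mem_singleton] at hv'
  rw [mem_inter] at hs
  have hsv : s ≠ v := fun h => disjoint_left.mp hvS (mem_singleton_self v) (h ▸ hs.2)
  have hsN := mem_orbitalNeighbors_of_mem_image hA hg (hv'.2 ▸ hv'.1) hs.1 hsv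
  simpa [T, hsN] using hST hs.2

end OrbitalGraph

theorem not_two_homogeneous_threshold_general (G : Subgroup (Equiv.Perm Ω))
    (hnothom : ¬ IsHomogeneous G 2) :
    ∀ l : ℕ, 2 ≤ l → l ≤ (Fintype.card Ω + 1) / 2 → ¬ HasUT G 2 l := by
  intro l hl hln
  obtain ⟨A, B, hA, hB, hAB⟩ :
      ∃ A B : Finset Ω, #A = 2 ∧ #B = 2 ∧ ∀ g ∈ G, A.image g ≠ B := by
    simpa [IsHomogeneous] using hnothom
  obtain ⟨v, -⟩ := card_pos.mp (hA ▸ two_pos)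
  have hsum := card_orbitalNeighbors_add_card_le hAB v
  rcases le_total #(orbitalNeighbors G A v) #(orbitalNeighbors G B v) with h | h
  · exact not_hasUT_of_card_orbitalNeighbors_add_le hA v hl (by omega)
  · exact not_hasUT_of_card_orbitalNeighbors_add_le hB v hl (by omega)

theorem not_two_homogeneous_threshold (G : Subgroup (Equiv.Perm Ω))
    (htrans : ∀ a b : Ω, ∃ g ∈ G, g a = b)
    (hnothom : ¬ IsHomogeneous G 2) :
    ∀ l : ℕ, 2 ≤ l → l ≤ (Fintype.card Ω + 1) / 2 → ¬ HasUT G 2 l :=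
  not_two_homogeneous_threshold_general G hnothom
end
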